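/- arXiv:2411.02560 — 7 statements merged into one kernel-verified Lean document; each statement's English description precedes it below -/
import Mathlib

section
/- Let d ≥ 2 be an integer, let δ ∈ [0, 1/d], and let N ∈ ℝ^{d×d} be a δ-upper bounded stochastic matrix. Then for every x ∈ ℝ^d with ‖x‖_∞ = 1, one has ‖N·x‖_∞ ≥ (1 − dδ)/(d − 1); equivalently, inf_{‖x‖_∞ = 1} ‖N·x‖_∞ ≥ (1 − dδ)/(d − 1). -/
/-- A square real matrix is stochastic if all of its entries are non-negative and the
entries of each of its rows sum to 1. -/
def IsStochastic {d : ℕ} (A : Matrix (Fin d) (Fin d) ℝ) : Prop :=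
  (∀ i j, 0 ≤ A i j) ∧ ∀ i, ∑ j, A i j = 1

/-- A stochastic matrix `N` is `δ`-upper bounded if `N i i ≥ 1 - (d-1)δ` for every `i`
and `N i j ≤ δ` for every `i ≠ j`. -/
def IsDeltaUpperBounded {d : ℕ} (δ : ℝ) (N : Matrix (Fin d) (Fin d) ℝ) : Prop :=
  (∀ i, 1 - ((d : ℝ) - 1) * δ ≤ N i i) ∧ ∀ i j, i ≠ j → N i j ≤ δ

lemma aux_lower_bound
    (d : ℕ) (hd : 2 ≤ d) (δ : ℝ) (hδ0 : 0 ≤ δ) (hδ1 : δ ≤ 1 / d)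
    (N : Matrix (Fin d) (Fin d) ℝ) (hN : IsStochastic N) (hub : IsDeltaUpperBounded δ N)
    (x : Fin d → ℝ) (i : Fin d) (hxi : x i = 1) (hb : ∀ j, |x j| ≤ 1) :
    (1 - d * δ) / ((d : ℝ) - 1) ≤ ‖N.mulVec x‖ := by
  have hd1 : (1:ℝ) ≤ d := by exact_mod_cast Nat.one_le_of_lt hd
  have hd2 : (2:ℝ) ≤ d := by exact_mod_cast hd
  have hdpos : (0:ℝ) < d := by linarith
  have hdδ : (d:ℝ) * δ ≤ 1 := by
    have := mul_le_mul_of_nonneg_left hδ1 (le_of_lt hdpos)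
    rwa [mul_one_div, div_self (ne_of_gt hdpos)] at this
  set c := ‖N.mulVec x‖ with hc
  have hc0 : 0 ≤ c := norm_nonneg _
  have hcj : ∀ j, |N.mulVec x j| ≤ c := by
    intro j
    have := norm_le_pi_norm (N.mulVec x) j
    simpa [Real.norm_eq_abs] using this
  -- minimizer k
  obtain ⟨k, -, hk⟩ := Finset.exists_min_image Finset.univ x ⟨i, Finset.mem_univ i⟩
  have hk' : ∀ j, x k ≤ x j := fun j => hk j (Finset.mem_univ j)
  set t : ℝ := max (-(x k)) 0 with htdef
  have ht0 : 0 ≤ t := le_max_right _ _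
  have ht1 : t ≤ 1 := by
    apply max_le _ (by norm_num)
    have := hb k
    cases abs_le.mp this with
    | intro h1 h2 => linarith
  have hxt : ∀ j, 0 ≤ x j + t := by
    intro j
    have h1 : -(x k) ≤ t := le_max_left _ _
    have := hk' j
    linarith
  have hx1 : ∀ j, x j ≤ 1 := fun j => (abs_le.mp (hb j)).2
  set S : ℝ := ∑ j, (1 - x j) with hSdef
  set T : ℝ := ∑ j, (x j + t) with hTdef
  have hST : S + T = d * (1 + t) := by
    rw [hSdef, hTdef, ← Finset.sum_add_distrib]
    have : ∀ j : Fin d, (1 - x j) + (x j + t) = 1 + t := fun j => by ring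
    rw [Finset.sum_congr rfl (fun j _ => this j)]
    simp [Finset.sum_const, Finset.card_univ]
    ring
  have hS : S ≤ ((d:ℝ) - 1) * (1 + t) := by
    have herase : S = ∑ j ∈ Finset.univ.erase i, (1 - x j) := by
      rw [hSdef, ← Finset.sum_erase_add _ _ (Finset.mem_univ i), hxi]
      ring
    rw [herase]
    calc ∑ j ∈ Finset.univ.erase i, (1 - x j)
        ≤ ∑ _j ∈ Finset.univ.erase i, (1 + t) := by
          apply Finset.sum_le_sum
          intro j _
          have := hxt j
          linarith
      _ = ((d:ℝ) - 1) * (1 + t) := by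
          rw [Finset.sum_const, Finset.card_erase_of_mem (Finset.mem_univ i)]
          simp [Finset.card_univ]
          rw [Nat.cast_sub (by omega)]
          push_cast
          ring
  -- row i bound : 1 - δ * S ≤ c
  have hrow_i : 1 - δ * S ≤ c := by
    have hyi : N.mulVec x i = 1 - ∑ j, N i j * (1 - x j) := by
      simp only [Matrix.mulVec, dotProduct]
      have : ∑ j, N i j * (1 - x j) = (∑ j, N i j) - ∑ j, N i j * x j := by
        rw [← Finset.sum_sub_distrib]
        apply Finset.sum_congr rfl
        intro j _; ring
      rw [this, hN.2 i]; ring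
    have hsum : ∑ j, N i j * (1 - x j) ≤ δ * S := by
      rw [hSdef, Finset.mul_sum]
      apply Finset.sum_le_sum
      intro j _
      by_cases hji : j = i
      · subst hji; rw [hxi]; simp
      · exact mul_le_mul_of_nonneg_right (hub.2 i j (Ne.symm hji)) (by linarith [hx1 j])
    have := hcj i
    have h1 : -(c) ≤ N.mulVec x i := by cases abs_le.mp this with | intro a b => linarith
    nlinarith [hcj i, abs_le.mp (hcj i)]
  -- row k bound : t - δ * T ≤ c
  have hrow_k : t - δ * T ≤ c := by
    rcases le_or_gt (-(x k)) 0 with hneg | hpos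
    · have htz : t = 0 := max_eq_right hneg
      have hT0 : 0 ≤ T := Finset.sum_nonneg fun j _ => hxt j
      nlinarith
    · have htk : t = -(x k) := max_eq_left (le_of_lt hpos)
      have hyk : ∑ j, N k j * (x j + t) = N.mulVec x k + t := by
        simp only [Matrix.mulVec, dotProduct, mul_add]
        rw [Finset.sum_add_distrib, ← Finset.sum_mul, hN.2 k, one_mul]
      have hsum : ∑ j, N k j * (x j + t) ≤ δ * T := by
        rw [hTdef, Finset.mul_sum]
        apply Finset.sum_le_sum
        intro j _
        by_cases hjk : j = k
        · subst hjk
          have : x j + t = 0 := by rw [htk]; ring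
          rw [this]; simp
        · exact mul_le_mul_of_nonneg_right (hub.2 k j (Ne.symm hjk)) (hxt j)
      have habs := abs_le.mp (hcj k)
      have : N.mulVec x k + t ≤ δ * T := by rw [← hyk]; exact hsum
      linarith [habs.1]
  -- conclusion
  rw [div_le_iff₀ (by linarith : (0:ℝ) < (d:ℝ) - 1)]
  have hδST : δ * S + δ * T = δ * (↑d * (1 + t)) := by rw [← mul_add, hST]
  have h2c : 1 + t - δ * (↑d * (1 + t)) ≤ 2 * c := by linarith
  rcases lt_or_ge (d:ℝ) 3 with h3 | h3
  · -- d = 2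
    have hdn : d < 3 := by exact_mod_cast h3
    have hde : (d:ℝ) = 2 := by
      have : d = 2 := by omega
      rw [this]; norm_num
    rw [hde] at hS ⊢
    nlinarith [mul_nonneg hδ0 (by linarith : (0:ℝ) ≤ 2 - S)]
  · nlinarith [mul_nonneg ht0 (by linarith : (0:ℝ) ≤ 1 - ↑d * δ),
      mul_nonneg hc0 (by linarith : (0:ℝ) ≤ ↑d - 3), h2c]

theorem lower_bound_infinity_norm
    (d : ℕ) (hd : 2 ≤ d) (δ : ℝ) (hδ0 : 0 ≤ δ) (hδ1 : δ ≤ 1 / d)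
    (N : Matrix (Fin d) (Fin d) ℝ) (hN : IsStochastic N) (hub : IsDeltaUpperBounded δ N) :
    ∀ x : Fin d → ℝ, ‖x‖ = 1 → ‖N.mulVec x‖ ≥ (1 - d * δ) / ((d : ℝ) - 1) := by
  intro x hx
  have hne : Nonempty (Fin d) := ⟨⟨0, by omega⟩⟩
  obtain ⟨i, -, hi⟩ := Finset.exists_max_image Finset.univ (fun j => |x j|)
    ⟨Classical.arbitrary (Fin d), Finset.mem_univ _⟩
  have hb : ∀ j, |x j| ≤ 1 := by
    intro j
    have := norm_le_pi_norm x j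
    rw [hx] at this
    simpa [Real.norm_eq_abs] using this
  have hxile : ‖x‖ ≤ |x i| := by
    apply pi_norm_le_iff_of_nonneg (abs_nonneg _) |>.mpr
    intro j
    simpa [Real.norm_eq_abs] using hi j (Finset.mem_univ j)
  have hxi : |x i| = 1 := le_antisymm (hb i) (by rw [← hx]; exact hxile)
  rcases (abs_eq (by norm_num : (0:ℝ) ≤ 1)).mp hxi with h1 | h1
  · exact aux_lower_bound d hd δ hδ0 hδ1 N hN hub x i h1 hb
  · have := aux_lower_bound d hd δ hδ0 hδ1 N hN hub (-x) i (by simp [h1])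
      (fun j => by simpa using hb j)
    rwa [Matrix.mulVec_neg, norm_neg] at this
end

section
/- Let d ≥ 2 be an integer, let δ ∈ [0, 1/d), and let N ∈ ℝ^{d×d} be a δ-upper bounded stochastic matrix. Then N is invertible, and ‖N⁻¹‖_∞ ≤ (d − 1)/(1 − dδ). -/
/-- The `ℓ∞` operator norm of a matrix, `max_i ∑_j |A i j|`. -/
noncomputable def linftyOpNorm {d : ℕ} (A : Matrix (Fin d) (Fin d) ℝ) : ℝ :=
  ⨆ i, ∑ j, |A i j|

set_option maxHeartbeats 1000000 in
lemma key_estimate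
    (d : ℕ) (hd : 2 ≤ d) (δ : ℝ) (hδ0 : 0 ≤ δ) (hδ1 : δ < 1 / d)
    (N : Matrix (Fin d) (Fin d) ℝ) (hN : IsStochastic N) (hub : IsDeltaUpperBounded δ N)
    (x : Fin d → ℝ) (C : ℝ) (hC : ∀ i, |N.mulVec x i| ≤ C) (p : Fin d) :
    (1 - (d : ℝ) * δ) * |x p| ≤ ((d : ℝ) - 1) * C := by
  have hdpos : (0 : ℝ) < d := by positivity
  have hne : Nonempty (Fin d) := ⟨⟨0, by omega⟩⟩
  have hdd : (d : ℝ) * δ < 1 := by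
    rw [lt_div_iff₀ hdpos] at hδ1; linarith [hδ1]
  obtain ⟨i, hi⟩ := Finite.exists_max x
  obtain ⟨k, hk⟩ := Finite.exists_min x
  set y := N.mulVec x with hy
  -- basic rewriting: x i - y i = ∑ j, N i j * (x i - x j)
  have hrow : ∀ q : Fin d, x q - y q = ∑ j, N q j * (x q - x j) := by
    intro q
    have h1 : ∑ j, N q j * x q = x q := by
      rw [← Finset.sum_mul, hN.2 q, one_mul]
    have h2 : y q = ∑ j, N q j * x j := by
      simp [hy, Matrix.mulVec, dotProduct]
    calc x q - y q = (∑ j, N q j * x q) - ∑ j, N q j * x j := by rw [h1, h2]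
      _ = ∑ j, (N q j * x q - N q j * x j) := by rw [Finset.sum_sub_distrib]
      _ = ∑ j, N q j * (x q - x j) := by
          apply Finset.sum_congr rfl; intro j _; ring
  have hcard : ((Finset.univ.erase i).card : ℝ) = (d : ℝ) - 1 := by
    rw [Finset.card_erase_of_mem (Finset.mem_univ i)]
    simp only [Finset.card_univ, Fintype.card_fin]
    have : (1 : ℕ) ≤ d := by omega
    push_cast [Nat.cast_sub this]
    ring
  have hcardk : ((Finset.univ.erase k).card : ℝ) = (d : ℝ) - 1 := by
    rw [Finset.card_erase_of_mem (Finset.mem_univ k)]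
    simp only [Finset.card_univ, Fintype.card_fin]
    have : (1 : ℕ) ≤ d := by omega
    push_cast [Nat.cast_sub this]
    ring
  -- (a) x i - y i ≤ (d-1) δ (x i - x k)
  have ha : x i - y i ≤ ((d : ℝ) - 1) * δ * (x i - x k) := by
    rw [hrow i]
    rw [← Finset.add_sum_erase _ _ (Finset.mem_univ i)]
    have hzero : N i i * (x i - x i) = 0 := by ring
    rw [hzero, zero_add]
    calc ∑ j ∈ Finset.univ.erase i, N i j * (x i - x j)
        ≤ ∑ j ∈ Finset.univ.erase i, δ * (x i - x k) := by
          apply Finset.sum_le_sum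
          intro j hj
          have hji : j ≠ i := Finset.ne_of_mem_erase hj
          have h1 : N i j ≤ δ := hub.2 i j (Ne.symm hji)
          have h2 : 0 ≤ x i - x j := by linarith [hi j]
          have h3 : x i - x j ≤ x i - x k := by linarith [hk j]
          have h4 : 0 ≤ N i j := hN.1 i j
          nlinarith
      _ = ((d : ℝ) - 1) * δ * (x i - x k) := by
          rw [Finset.sum_const, nsmul_eq_mul, hcard]; ring
  -- (b) y k - x k ≤ (d-1) δ (x i - x k)
  have hb : y k - x k ≤ ((d : ℝ) - 1) * δ * (x i - x k) := by
    have : x k - y k = ∑ j, N k j * (x k - x j) := hrow k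
    have heq : y k - x k = ∑ j, N k j * (x j - x k) := by
      rw [show y k - x k = -(x k - y k) by ring, this, ← Finset.sum_neg_distrib]
      congr 1; ext j; ring
    rw [heq, ← Finset.add_sum_erase _ _ (Finset.mem_univ k)]
    have hzero : N k k * (x k - x k) = 0 := by ring
    rw [hzero, zero_add]
    calc ∑ j ∈ Finset.univ.erase k, N k j * (x j - x k)
        ≤ ∑ j ∈ Finset.univ.erase k, δ * (x i - x k) := by
          apply Finset.sum_le_sum
          intro j hj
          have hjk : j ≠ k := Finset.ne_of_mem_erase hj
          have h1 : N k j ≤ δ := hub.2 k j (Ne.symm hjk)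
          have h2 : 0 ≤ x j - x k := by linarith [hk j]
          have h3 : x j - x k ≤ x i - x k := by linarith [hi j]
          have h4 : 0 ≤ N k j := hN.1 k j
          nlinarith
      _ = ((d : ℝ) - 1) * δ * (x i - x k) := by
          rw [Finset.sum_const, nsmul_eq_mul, hcardk]; ring
  -- (c) (1 - dδ)(x i - x k) ≤ y i - y k
  have hc : (1 - (d : ℝ) * δ) * (x i - x k) ≤ y i - y k := by
    have h1 : x i - y i ≤ δ * ∑ j, (x i - x j) := by
      rw [hrow i, Finset.mul_sum]
      apply Finset.sum_le_sum
      intro j _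
      have h2 : 0 ≤ x i - x j := by linarith [hi j]
      by_cases hji : j = i
      · subst hji; nlinarith
      · have : N i j ≤ δ := hub.2 i j (Ne.symm hji)
        nlinarith [hN.1 i j]
    have h2 : y k - x k ≤ δ * ∑ j, (x j - x k) := by
      have heq : y k - x k = ∑ j, N k j * (x j - x k) := by
        rw [show y k - x k = -(x k - y k) by ring, hrow k, ← Finset.sum_neg_distrib]
        congr 1; ext j; ring
      rw [heq, Finset.mul_sum]
      apply Finset.sum_le_sum
      intro j _
      have h3 : 0 ≤ x j - x k := by linarith [hk j]
      by_cases hjk : j = k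
      · subst hjk; nlinarith
      · have : N k j ≤ δ := hub.2 k j (Ne.symm hjk)
        nlinarith [hN.1 k j]
    have hs1 : ∑ j, (x i - x j) = (d : ℝ) * x i - ∑ j, x j := by
      rw [Finset.sum_sub_distrib, Finset.sum_const, nsmul_eq_mul]
      simp [Finset.card_univ]
    have hs2 : ∑ j, (x j - x k) = (∑ j, x j) - (d : ℝ) * x k := by
      rw [Finset.sum_sub_distrib, Finset.sum_const, nsmul_eq_mul]
      simp [Finset.card_univ]
    rw [hs1] at h1; rw [hs2] at h2
    nlinarith [h1, h2]
  have hCpos : 0 ≤ C := le_trans (abs_nonneg _) (hC i)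
  have hyiC : |y i| ≤ C := hC i
  have hykC : |y k| ≤ C := hC k
  have hyi1 : y i ≤ C := le_trans (le_abs_self _) hyiC
  have hyi2 : -C ≤ y i := neg_le_of_abs_le hyiC
  have hyk1 : y k ≤ C := le_trans (le_abs_self _) hykC
  have hyk2 : -C ≤ y k := neg_le_of_abs_le hykC
  -- (1 - dδ)(x i - x k) ≤ 2C
  have hik : (1 - (d : ℝ) * δ) * (x i - x k) ≤ 2 * C := by linarith
  have hikpos : 0 ≤ x i - x k := by linarith [hi p, hk p]
  -- |x p| ≤ C + (d-1)δ(x i - x k)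
  have hB : |x p| ≤ C + ((d : ℝ) - 1) * δ * (x i - x k) := by
    rw [abs_le]
    constructor
    · -- -(C + ...) ≤ x p : from x p ≥ x k ≥ y k - (d-1)δ(xi-xk) ≥ -C - ...
      have := hk p
      linarith
    · have := hi p
      linarith
  have hd1δ : 0 ≤ ((d : ℝ) - 1) * δ := by
    have : (2 : ℝ) ≤ d := by exact_mod_cast hd
    nlinarith
  have hmul : ((d : ℝ) - 1) * δ * ((1 - (d : ℝ) * δ) * (x i - x k)) ≤ ((d : ℝ) - 1) * δ * (2 * C) :=
    mul_le_mul_of_nonneg_left hik hd1δ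
  have h2d : (2 : ℝ) ≤ d := by exact_mod_cast hd
  have hδ1' : δ ≤ 1 := by
    have : (1 : ℝ) / d ≤ 1 := by
      rw [div_le_one hdpos]; linarith
    linarith
  have hpos : (0:ℝ) ≤ 1 - (d:ℝ) * δ := by linarith
  have hBmul := mul_le_mul_of_nonneg_left hB hpos
  have hfinal : C * (1 + ((d:ℝ) - 2) * δ) ≤ C * ((d:ℝ) - 1) := by
    nlinarith [mul_nonneg (mul_nonneg hCpos (by linarith : (0:ℝ) ≤ (d:ℝ) - 2))
      (by linarith : (0:ℝ) ≤ 1 - δ)]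
  calc (1 - (d:ℝ) * δ) * |x p|
      ≤ (1 - (d:ℝ) * δ) * (C + ((d:ℝ) - 1) * δ * (x i - x k)) := hBmul
    _ = (1 - (d:ℝ) * δ) * C + ((d:ℝ) - 1) * δ * ((1 - (d:ℝ) * δ) * (x i - x k)) := by ring
    _ ≤ (1 - (d:ℝ) * δ) * C + ((d:ℝ) - 1) * δ * (2 * C) := by linarith [hmul]
    _ = C * (1 + ((d:ℝ) - 2) * δ) := by ring
    _ ≤ C * ((d:ℝ) - 1) := hfinal
    _ = ((d:ℝ) - 1) * C := by ring

theorem upper_bounded_matrix_invertible_and_inverse_norm_bound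
    (d : ℕ) (hd : 2 ≤ d) (δ : ℝ) (hδ0 : 0 ≤ δ) (hδ1 : δ < 1 / d)
    (N : Matrix (Fin d) (Fin d) ℝ) (hN : IsStochastic N) (hub : IsDeltaUpperBounded δ N) :
    IsUnit N.det ∧ linftyOpNorm N⁻¹ ≤ ((d : ℝ) - 1) / (1 - d * δ) := by
  have hdpos : (0 : ℝ) < d := by positivity
  have hdd : 0 < 1 - (d : ℝ) * δ := by
    rw [lt_div_iff₀ hdpos] at hδ1; linarith
  have hne : Nonempty (Fin d) := ⟨⟨0, by omega⟩⟩
  -- invertibility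
  have hdet : IsUnit N.det := by
    rw [isUnit_iff_ne_zero]
    intro h0
    obtain ⟨v, hv, hNv⟩ := Matrix.exists_mulVec_eq_zero_iff.mpr h0
    apply hv
    funext p
    have := key_estimate d hd δ hδ0 hδ1 N hN hub v 0 (fun i => by simp [hNv]) p
    have habs : |v p| ≤ 0 := by nlinarith [abs_nonneg (v p)]
    simpa using le_antisymm habs (abs_nonneg _)
  refine ⟨hdet, ?_⟩
  have hinv : N * N⁻¹ = 1 := Matrix.mul_nonsing_inv N hdet
  apply ciSup_le
  intro i
  set s : Fin d → ℝ := fun j => if 0 ≤ N⁻¹ i j then 1 else -1 with hs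
  set x : Fin d → ℝ := N⁻¹.mulVec s with hx
  have hNx : N.mulVec x = s := by
    rw [hx, Matrix.mulVec_mulVec, hinv, Matrix.one_mulVec]
  have hC : ∀ j, |N.mulVec x j| ≤ 1 := by
    intro j
    rw [hNx, hs]
    dsimp only
    split <;> simp
  have hkey := key_estimate d hd δ hδ0 hδ1 N hN hub x 1 hC i
  have hxi : ∑ j, |N⁻¹ i j| = x i := by
    rw [hx]
    simp only [Matrix.mulVec, dotProduct, hs]
    apply Finset.sum_congr rfl
    intro j _
    by_cases h : 0 ≤ N⁻¹ i j
    · rw [if_pos h, abs_of_nonneg h, mul_one]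
    · rw [if_neg h, abs_of_neg (not_le.mp h)]; ring
  rw [hxi, le_div_iff₀ hdd]
  have : x i ≤ |x i| := le_abs_self _
  nlinarith [hkey]
end

section
/- Let d ≥ 2 be an integer, let δ ∈ [0, 1/d), and let N ∈ ℝ^{d×d} be a δ-upper bounded stochastic matrix. Then every entry of the inverse matrix satisfies (N⁻¹)_{ij} ≥ −2(d−1)²·δ/(1 − dδ); equivalently, −min_{i,j} (N⁻¹)_{ij} ≤ 2(d−1)²·δ/(1 − dδ). -/
theorem inverse_entries_lower_bound
    (d : ℕ) (hd : 2 ≤ d) (δ : ℝ) (hδ0 : 0 ≤ δ) (hδ1 : δ < 1 / d)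
    (N : Matrix (Fin d) (Fin d) ℝ) (hN : IsStochastic N) (hub : IsDeltaUpperBounded δ N) :
    ∀ i j, N⁻¹ i j ≥ -(2 * ((d : ℝ) - 1) ^ 2 * δ / (1 - d * δ)) := by
  intro i j
  have hd2 : (2:ℝ) ≤ (d:ℝ) := by exact_mod_cast hd
  have hd1 : (1:ℝ) ≤ (d:ℝ) - 1 := by linarith
  have hd0 : (0:ℝ) < d := by linarith
  have hdδ : (d:ℝ) * δ < 1 := by
    have h := (lt_div_iff₀ hd0).mp hδ1
    linarith
  have hden : (0:ℝ) < 1 - (d:ℝ) * δ := by linarith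
  have hRHSnn : 0 ≤ 2 * ((d:ℝ) - 1) ^ 2 * δ / (1 - (d:ℝ) * δ) := by
    apply div_nonneg _ hden.le
    positivity
  by_cases hdet : IsUnit N.det
  · have hmul := Matrix.mul_nonsing_inv N hdet
    set x : Fin d → ℝ := fun k => N⁻¹ k j with hxdef
    have hrow : ∀ r, ∑ k, N r k * x k = if r = j then 1 else 0 := by
      intro r
      have h := congrFun (congrFun hmul r) j
      rw [Matrix.mul_apply, Matrix.one_apply] at h
      exact h
    have hne : Nonempty (Fin d) := ⟨⟨0, by omega⟩⟩
    obtain ⟨p, hp⟩ := Finite.exists_max x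
    obtain ⟨q, hq⟩ := Finite.exists_min x
    set M := x p with hM
    set m := x q with hm
    set s : ℝ := ∑ k, x k with hs
    have hMm0 : 0 ≤ M - m := by linarith [hq p]
    -- row p identity and bound
    have hsum1 : M - (if p = j then 1 else 0) = ∑ k, N p k * (M - x k) := by
      have h1 : ∑ k, N p k * (M - x k) = (∑ k, N p k) * M - ∑ k, N p k * x k := by
        rw [Finset.sum_mul, ← Finset.sum_sub_distrib]
        congr 1; funext k; ring
      rw [h1, hN.2 p, hrow p]; ring
    have hb1 : ∑ k, N p k * (M - x k) ≤ δ * ((d:ℝ) * M - s) := by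
      have step : ∑ k, N p k * (M - x k) ≤ ∑ k, δ * (M - x k) := by
        apply Finset.sum_le_sum
        intro k _
        by_cases hk : k = p
        · subst hk
          have hz : M - x k = 0 := by rw [hM, sub_self]
          rw [hz, mul_zero, mul_zero]
        · exact mul_le_mul_of_nonneg_right (hub.2 p k (Ne.symm hk)) (by linarith [hp k])
      have heq : ∑ k, δ * (M - x k) = δ * ((d:ℝ) * M - s) := by
        rw [← Finset.mul_sum, Finset.sum_sub_distrib, Finset.sum_const, Finset.card_univ,
          Fintype.card_fin, nsmul_eq_mul, hs]
      linarith [step, heq.le, heq.ge]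
    -- row q identity and bound
    have hsum2 : (if q = j then (1:ℝ) else 0) - m = ∑ k, N q k * (x k - m) := by
      have h1 : ∑ k, N q k * (x k - m) = ∑ k, N q k * x k - (∑ k, N q k) * m := by
        rw [Finset.sum_mul, ← Finset.sum_sub_distrib]
        congr 1; funext k; ring
      rw [h1, hN.2 q, hrow q]; ring
    have hb2 : ∑ k, N q k * (x k - m) ≤ δ * (s - (d:ℝ) * m) := by
      have step : ∑ k, N q k * (x k - m) ≤ ∑ k, δ * (x k - m) := by
        apply Finset.sum_le_sum
        intro k _
        by_cases hk : k = q
        · subst hk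
          have hz : x k - m = 0 := by rw [hm, sub_self]
          rw [hz, mul_zero, mul_zero]
        · exact mul_le_mul_of_nonneg_right (hub.2 q k (Ne.symm hk)) (by linarith [hq k])
      have heq : ∑ k, δ * (x k - m) = δ * (s - (d:ℝ) * m) := by
        rw [← Finset.mul_sum, Finset.sum_sub_distrib, Finset.sum_const, Finset.card_univ,
          Fintype.card_fin, nsmul_eq_mul, hs]
      linarith [step, heq.le, heq.ge]
    have i1 : (if p = j then (1:ℝ) else 0) ≤ 1 := by split <;> norm_num
    have i2 : (0:ℝ) ≤ if q = j then (1:ℝ) else 0 := by split <;> norm_num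
    have e1 : M - (if p = j then (1:ℝ) else 0) ≤ δ * ((d:ℝ) * M - s) := hsum1 ▸ hb1
    have e2 : (if q = j then (1:ℝ) else 0) - m ≤ δ * (s - (d:ℝ) * m) := hsum2 ▸ hb2
    have h3 : (1 - (d:ℝ) * δ) * (M - m) ≤ 1 := by nlinarith [e1, e2, i1, i2]
    -- refined bound on -m
    have h4 : -m ≤ δ * (((d:ℝ) - 1) * (M - m)) := by
      have hb : ∑ k, N q k * (x k - m) ≤ δ * (((d:ℝ) - 1) * (M - m)) := by
        have step : ∑ k, N q k * (x k - m) ≤ ∑ k, δ * (x k - m) := by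
          apply Finset.sum_le_sum
          intro k _
          by_cases hk : k = q
          · subst hk
            have hz : x k - m = 0 := by rw [hm, sub_self]
            rw [hz, mul_zero, mul_zero]
          · exact mul_le_mul_of_nonneg_right (hub.2 q k (Ne.symm hk)) (by linarith [hq k])
        have split : ∑ k, δ * (x k - m)
            = δ * (x q - m) + ∑ k ∈ Finset.univ.erase q, δ * (x k - m) :=
          (Finset.add_sum_erase Finset.univ (fun k => δ * (x k - m))
            (Finset.mem_univ q)).symm
        have hz : δ * (x q - m) = 0 := by rw [hm, sub_self, mul_zero]
        have hbound : ∑ k ∈ Finset.univ.erase q, δ * (x k - m)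
            ≤ ∑ k ∈ Finset.univ.erase q, δ * (M - m) := by
          apply Finset.sum_le_sum
          intro k _
          exact mul_le_mul_of_nonneg_left (by linarith [hp k]) hδ0
        have hcard : (Finset.univ.erase q).card = d - 1 := by
          rw [Finset.card_erase_of_mem (Finset.mem_univ q), Finset.card_univ, Fintype.card_fin]
        have hconst : ∑ _k ∈ Finset.univ.erase q, δ * (M - m) = ((d:ℝ) - 1) * (δ * (M - m)) := by
          rw [Finset.sum_const, hcard, nsmul_eq_mul]
          have : ((d - 1 : ℕ) : ℝ) = (d:ℝ) - 1 := by
            have : (1:ℕ) ≤ d := by omega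
            push_cast [Nat.cast_sub this]
            ring
          rw [this]
        calc ∑ k, N q k * (x k - m) ≤ ∑ k, δ * (x k - m) := step
          _ = δ * (x q - m) + ∑ k ∈ Finset.univ.erase q, δ * (x k - m) := split
          _ = ∑ k ∈ Finset.univ.erase q, δ * (x k - m) := by rw [hz, zero_add]
          _ ≤ ∑ _k ∈ Finset.univ.erase q, δ * (M - m) := hbound
          _ = ((d:ℝ) - 1) * (δ * (M - m)) := hconst
          _ = δ * (((d:ℝ) - 1) * (M - m)) := by ring
      have : (if q = j then (1:ℝ) else 0) - m ≤ δ * (((d:ℝ) - 1) * (M - m)) := hsum2 ▸ hb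
      linarith
    have hkey : -(2 * ((d:ℝ) - 1) ^ 2 * δ) ≤ m * (1 - (d:ℝ) * δ) := by
      have t1 : (-m) * (1 - (d:ℝ) * δ) ≤ δ * (((d:ℝ) - 1) * (M - m)) * (1 - (d:ℝ) * δ) :=
        mul_le_mul_of_nonneg_right h4 hden.le
      have t2 : δ * ((d:ℝ) - 1) * ((1 - (d:ℝ) * δ) * (M - m)) ≤ δ * ((d:ℝ) - 1) * 1 :=
        mul_le_mul_of_nonneg_left h3 (by positivity)
      have t3 : δ * ((d:ℝ) - 1) ≤ 2 * ((d:ℝ) - 1) ^ 2 * δ := by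
        nlinarith [mul_nonneg hδ0 (by linarith : (0:ℝ) ≤ (d:ℝ) - 1)]
      nlinarith [t1, t2, t3]
    have hgoal : -(2 * ((d:ℝ) - 1) ^ 2 * δ / (1 - (d:ℝ) * δ)) ≤ m := by
      rw [show -(2 * ((d:ℝ) - 1) ^ 2 * δ / (1 - (d:ℝ) * δ))
          = (-(2 * ((d:ℝ) - 1) ^ 2 * δ)) / (1 - (d:ℝ) * δ) by ring]
      rw [div_le_iff₀ hden]
      exact hkey
    exact le_trans hgoal (hq i)
  · rw [Matrix.nonsing_inv_apply_not_isUnit N hdet]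
    simp only [Matrix.zero_apply]
    linarith
end

section
/- Let d ≥ 2 be an integer, let δ ∈ [0, 1/d), and let N ∈ ℝ^{d×d} be a δ-upper bounded stochastic matrix. Set δ' = f(δ), where f(0) = 0 and f(δ) = (d + (1/2)·(1/(d−1)²)·(1−dδ)/δ)^{−1} for δ > 0. Then there exists a stochastic matrix P ∈ ℝ^{d×d} such that N·P is δ'-uniform. -/
/-- A matrix `T` is `δ'`-uniform if `T i i = 1 - (d-1)δ'` for every `i`
and `T i j = δ'` for every `i ≠ j`. -/
def IsDeltaUniform {d : ℕ} (δ' : ℝ) (T : Matrix (Fin d) (Fin d) ℝ) : Prop :=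
  (∀ i, T i i = 1 - ((d : ℝ) - 1) * δ') ∧ ∀ i j, i ≠ j → T i j = δ'

/-- The function `f` from Definition 7 of the paper: `f 0 = 0` and
`f δ = (d + (1/2)·(1/(d-1)²)·(1-dδ)/δ)⁻¹` for `δ ≠ 0`. -/
noncomputable def noiseFun (d : ℕ) (δ : ℝ) : ℝ :=
  if δ = 0 then 0
  else ((d : ℝ) + (1 / 2) * (1 / ((d : ℝ) - 1) ^ 2) * (1 - d * δ) / δ)⁻¹

open Matrix BigOperators

/-- Min principle: if all off-diagonal entries of `A` are nonpositive and all row sums of `A`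
are positive, then any `v` with `A *ᵥ v` entrywise nonnegative is itself nonnegative. -/
lemma min_principle {d : ℕ} (A : Matrix (Fin d) (Fin d) ℝ)
    (hoff : ∀ i j, i ≠ j → A i j ≤ 0) (hrow : ∀ i, 0 < ∑ j, A i j)
    (v : Fin d → ℝ) (hb : ∀ i, 0 ≤ A.mulVec v i) : ∀ i, 0 ≤ v i := by
  by_contra h
  push_neg at h
  obtain ⟨i0, hi0⟩ := h
  obtain ⟨k, -, hk⟩ := Finset.exists_min_image Finset.univ v ⟨i0, Finset.mem_univ i0⟩
  have hvk : v k < 0 := lt_of_le_of_lt (hk i0 (Finset.mem_univ i0)) hi0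
  have h1 : A.mulVec v k ≤ (∑ j, A k j) * v k := by
    rw [Matrix.mulVec, dotProduct, Finset.sum_mul]
    refine Finset.sum_le_sum fun j _ => ?_
    rcases eq_or_ne k j with rfl | hj
    · exact le_refl _
    · exact mul_le_mul_of_nonpos_left (hk j (Finset.mem_univ j)) (hoff k j hj)
  have h2 : (∑ j, A k j) * v k < 0 := mul_neg_of_pos_of_neg (hrow k) hvk
  have := hb k
  linarith

theorem exists_artificial_noise_making_uniform
    (d : ℕ) (hd : 2 ≤ d) (δ : ℝ) (hδ0 : 0 ≤ δ) (hδ1 : δ < 1 / d)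
    (N : Matrix (Fin d) (Fin d) ℝ) (hN : IsStochastic N) (hub : IsDeltaUpperBounded δ N) :
    ∃ P : Matrix (Fin d) (Fin d) ℝ, IsStochastic P ∧ IsDeltaUniform (noiseFun d δ) (N * P) := by
  have hD2 : (2:ℝ) ≤ (d:ℝ) := by exact_mod_cast hd
  have hDpos : (0:ℝ) < (d:ℝ) := by linarith
  rcases eq_or_lt_of_le hδ0 with hδz | hδpos
  · -- δ = 0 : N is the identity pattern, take P = 1
    refine ⟨1, ⟨?_, ?_⟩, ?_, ?_⟩
    · intro i j
      by_cases h : i = j <;> simp [Matrix.one_apply, h]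
    · intro i
      simp [Matrix.one_apply]
    · intro i
      rw [mul_one]
      have hδ' : noiseFun d δ = 0 := by simp [noiseFun, ← hδz]
      rw [hδ']
      have hle : N i i ≤ 1 := by
        have := hN.2 i
        have h2 : N i i ≤ ∑ j, N i j :=
          Finset.single_le_sum (fun j _ => hN.1 i j) (Finset.mem_univ i)
        linarith
      have hge := hub.1 i
      rw [← hδz] at hge
      simp at hge ⊢
      linarith
    · intro i j hij
      rw [mul_one]
      have hδ' : noiseFun d δ = 0 := by simp [noiseFun, ← hδz]
      rw [hδ']
      have h1 := hub.2 i j hij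
      rw [← hδz] at h1
      exact le_antisymm h1 (hN.1 i j)
  · -- δ > 0
    set D : ℝ := (d:ℝ) with hDdef
    have hc : 0 < 1 - D * δ := by
      have : D * δ < D * (1/D) := by
        apply mul_lt_mul_of_pos_left _ hDpos
        exact hδ1
      rw [mul_one_div, div_self hDpos.ne'] at this
      linarith
    set c : ℝ := 1 - D * δ with hcdef
    set k : ℝ := D + 1 / 2 * (1 / (D - 1) ^ 2) * (1 - D * δ) / δ with hkdef
    have hD1 : (1:ℝ) ≤ D - 1 := by linarith
    have hepos : (0:ℝ) < (D - 1)^2 := by positivity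
    have hkD : D ≤ k := by
      have h : 0 ≤ 1 / 2 * (1 / (D - 1) ^ 2) * (1 - D * δ) / δ := by positivity
      rw [hkdef]
      linarith
    have hkpos : 0 < k := by linarith
    set δ' : ℝ := noiseFun d δ with hδ'def
    have hδ'k : δ' = k⁻¹ := by
      rw [hδ'def, noiseFun, if_neg hδpos.ne']
    have hδ'pos : 0 < δ' := by rw [hδ'k]; positivity
    have hkδ' : k * δ' = 1 := by rw [hδ'k]; exact mul_inv_cancel₀ hkpos.ne'
    have h1mD : 0 ≤ 1 - D * δ' := by
      have : D * δ' ≤ k * δ' := mul_le_mul_of_nonneg_right hkD hδ'pos.le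
      rw [hkδ'] at this
      linarith
    -- key inequality : (1 - D δ') * (D * δ) ≤ δ' * c
    have hkey : (1 - D * δ') * (D * δ) ≤ δ' * c := by
      have hg : (k - D) * (2 * (D - 1)^2 * δ) = c := by
        rw [hkdef]
        field_simp
        ring
      have hpoly : 0 ≤ 2 * (D - 1)^2 - D := by nlinarith
      have h2 : (k - D) * (D * δ) ≤ c := by
        nlinarith [mul_nonneg (mul_nonneg hc.le hδ0) hpoly, hg]
      have h3 : 1 - D * δ' = (k - D) * δ' := by
        have : (k - D) * δ' = k * δ' - D * δ' := by ring
        rw [this, hkδ']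
      rw [h3]
      calc (k - D) * δ' * (D * δ) = ((k - D) * (D * δ)) * δ' := by ring
        _ ≤ c * δ' := mul_le_mul_of_nonneg_right h2 hδ'pos.le
        _ = δ' * c := by ring
    -- the all-ones matrix and A = N - δ J
    set J : Matrix (Fin d) (Fin d) ℝ := Matrix.of (fun _ _ => (1:ℝ)) with hJdef
    set A : Matrix (Fin d) (Fin d) ℝ := N - δ • J with hAdef
    have hAapp : ∀ i j, A i j = N i j - δ := by
      intro i j
      simp [hAdef, hJdef, Matrix.sub_apply, Matrix.smul_apply, smul_eq_mul]
    have hAoff : ∀ i j, i ≠ j → A i j ≤ 0 := by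
      intro i j hij
      rw [hAapp]
      linarith [hub.2 i j hij]
    have hArow : ∀ i, ∑ j, A i j = c := by
      intro i
      simp only [hAapp]
      rw [Finset.sum_sub_distrib, hN.2 i, Finset.sum_const, Finset.card_univ,
        Fintype.card_fin, nsmul_eq_mul]
    have hArowpos : ∀ i, 0 < ∑ j, A i j := fun i => by rw [hArow]; exact hc
    -- A is invertible
    have hdet : A.det ≠ 0 := by
      intro hdet0
      obtain ⟨v, hv0, hv⟩ := (Matrix.exists_mulVec_eq_zero_iff).mpr hdet0
      have h1 : ∀ i, 0 ≤ v i := by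
        apply min_principle A hAoff hArowpos
        intro i; rw [hv]; exact le_refl 0
      have h2 : ∀ i, 0 ≤ (-v) i := by
        apply min_principle A hAoff hArowpos
        intro i
        rw [Matrix.mulVec_neg, hv]
        simp
      apply hv0
      funext i
      have ha := h1 i
      have hb := h2 i
      rw [Pi.neg_apply] at hb
      simp only [Pi.zero_apply]
      linarith
    have hunit : IsUnit A.det := isUnit_iff_ne_zero.mpr hdet
    set B : Matrix (Fin d) (Fin d) ℝ := A⁻¹ with hBdef
    have hAB : A * B = 1 := Matrix.mul_nonsing_inv A hunit
    have hBA : B * A = 1 := Matrix.nonsing_inv_mul A hunit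
    -- B is entrywise nonnegative
    have hBnn : ∀ i j, 0 ≤ B i j := by
      intro i j
      have := min_principle A hAoff hArowpos (fun i => B i j) ?_ i
      · exact this
      · intro i
        have : A.mulVec (fun i => B i j) i = (A * B) i j := by
          rw [Matrix.mulVec, dotProduct, Matrix.mul_apply]
        rw [this, hAB]
        by_cases h : i = j <;> simp [Matrix.one_apply, h]
    -- row sums of B
    have hBrow : ∀ i, (∑ j, B i j) * c = 1 := by
      intro i
      have h1 : ∑ j, (B * A) i j = 1 := by
        rw [hBA]
        simp [Matrix.one_apply]
      have h2 : ∑ j, (B * A) i j = (∑ l, B i l) * c := by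
        simp only [Matrix.mul_apply]
        rw [Finset.sum_comm]
        rw [Finset.sum_mul]
        congr 1
        funext l
        rw [← Finset.mul_sum, hArow l]
      rw [h2] at h1
      exact h1
    have hBub : ∀ i j, B i j * c ≤ 1 := by
      intro i j
      have h1 : B i j ≤ ∑ l, B i l :=
        Finset.single_le_sum (fun l _ => hBnn i l) (Finset.mem_univ j)
      calc B i j * c ≤ (∑ l, B i l) * c := mul_le_mul_of_nonneg_right h1 hc.le
        _ = 1 := hBrow i
    -- column sums of B times c are at most D
    have hScol : ∀ j, (∑ i, B i j) * c ≤ D := by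
      intro j
      rw [Finset.sum_mul]
      calc ∑ i, B i j * c ≤ ∑ _i : Fin d, (1:ℝ) := Finset.sum_le_sum fun i _ => hBub i j
        _ = D := by simp [hDdef]
    -- N * J = J
    have hNJ : N * J = J := by
      ext i j
      simp only [Matrix.mul_apply, hJdef, Matrix.of_apply, mul_one]
      exact hN.2 i
    -- define P
    set P : Matrix (Fin d) (Fin d) ℝ :=
      (1 - D * δ') • (B - δ • (J * B)) + δ' • J with hPdef
    have hPapp : ∀ i j, P i j
        = (1 - D * δ') * (B i j - δ * ∑ l, B l j) + δ' := by
      intro i j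
      simp only [hPdef, Matrix.add_apply, Matrix.smul_apply, Matrix.sub_apply,
        smul_eq_mul, hJdef, Matrix.of_apply, Matrix.mul_apply, one_mul, mul_one]
    -- N * P is δ'-uniform
    have hNP : N * P = (1 - D * δ') • (1 : Matrix (Fin d) (Fin d) ℝ) + δ' • J := by
      rw [hPdef, Matrix.mul_add, Matrix.mul_smul, Matrix.mul_smul]
      rw [Matrix.mul_sub, Matrix.mul_smul, ← Matrix.mul_assoc, hNJ]
      have : N * B - δ • (J * B) = A * B := by
        rw [hAdef, Matrix.sub_mul, Matrix.smul_mul]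
      rw [this, hAB]
    refine ⟨P, ⟨?_, ?_⟩, ?_, ?_⟩
    · -- entries of P are nonnegative
      intro i j
      rw [hPapp]
      have hB0 := hBnn i j
      have hS0 : 0 ≤ ∑ l, B l j := Finset.sum_nonneg fun l _ => (hBnn l j)
      have hSc := hScol j
      nlinarith [mul_nonneg (mul_nonneg h1mD hB0) hc.le,
        mul_le_mul_of_nonneg_left hSc (mul_nonneg h1mD hδ0),
        mul_nonneg h1mD hδ0, hc, hkey]
    · -- rows of P sum to 1
      intro i
      simp only [hPapp]
      rw [Finset.sum_add_distrib, Finset.sum_const, Finset.card_univ, Fintype.card_fin,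
        nsmul_eq_mul, ← Finset.mul_sum]
      have hri : ∀ m : Fin d, ∑ l, B m l = 1 / c := by
        intro m
        rw [eq_div_iff hc.ne']
        exact hBrow m
      have h1 : ∑ j, (B i j - δ * ∑ l, B l j) = 1 := by
        rw [Finset.sum_sub_distrib, ← Finset.mul_sum]
        have h2 : ∑ j : Fin d, ∑ l, B l j = D / c := by
          rw [Finset.sum_comm]
          calc ∑ l : Fin d, ∑ j, B l j = ∑ _l : Fin d, 1 / c := by
                exact Finset.sum_congr rfl fun l _ => hri l
            _ = D / c := by simp [hDdef]; ring
        rw [h2, hri i]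
        field_simp
        ring
      rw [h1]
      ring
    · -- diagonal of N * P
      intro i
      rw [hNP]
      simp only [Matrix.add_apply, Matrix.smul_apply, Matrix.one_apply_eq, smul_eq_mul,
        hJdef, Matrix.of_apply, mul_one]
      rw [← hDdef]
      ring
    · -- off-diagonal of N * P
      intro i j hij
      rw [hNP]
      simp only [Matrix.add_apply, Matrix.smul_apply, Matrix.one_apply_ne hij, smul_eq_mul,
        hJdef, Matrix.of_apply, mul_one, mul_zero, zero_add]
end

section
/- Let m ≥ 1 be an integer, let θ ∈ (0, 1/2], and let B be a binomial random variable with parameters m and 1/2 + θ. Define g(θ, m) = θ·(1 − θ²)^{(m−1)/2} if θ < 1/√m, and g(θ, m) = (1/√m)·(1 − 1/m)^{(m−1)/2} if θ ≥ 1/√m. Then P(B > m/2) − P(B < m/2) ≥ √(2m/π)·g(θ, m). -/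
open MeasureTheory

/-!
Write `p = 1/2 + x`. The majority gap `P(B > m/2) - P(B < m/2)` equals `U(p) - U(1 - p)`, where the
upper tail `U` is a sum of Bernstein polynomials whose derivative telescopes to a single one. So the
gap vanishes at `x = 0` and has derivative `2 m c (1 - 4x²)^⌊(m-1)/2⌋` with `c = C(2n, n) / 4^n`,
`n = ⌊m/2⌋`; Wallis' product gives `c² ≥ 2 / (π (2n + 1))`. With `φ = min θ (1/√m)`, the rectangle
under the derivative on `[0, φ/2]` already gives the bound for odd `m`. For even `m` the Wallis
bound is short by a factor `√(2n / (2n + 1))`, which a second rectangle on `[φ/2, φ/√2]` recovers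
through Bernoulli's inequality.
-/

open Finset Real Polynomial

theorem two_div_le_sq_centralBinom_div_four_pow (n : ℕ) :
    2 / (π * (2 * n + 1)) ≤ ((n.centralBinom : ℝ) / 4 ^ n) ^ 2 := by
  have hW : Wallis.W n * ((n.centralBinom : ℝ) / 4 ^ n) ^ 2 * (2 * n + 1) = 1 := by
    rw [Wallis.W_eq_factorial_ratio, Nat.centralBinom_eq_two_mul_choose,
      Nat.cast_choose ℝ (by omega : n ≤ 2 * n), show 2 * n - n = n by omega, pow_mul,
      show (2 : ℝ) ^ 4 = 4 ^ 2 by norm_num, ← pow_mul, mul_comm 2 n, pow_mul]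
    have := (2 * n).factorial_pos
    have := n.factorial_pos
    field_simp
  rw [div_le_iff₀ (by positivity)]
  nlinarith [Wallis.W_le n, Wallis.W_pos n]

theorem mul_sub_le_sub_of_hasDerivAt {f f' : ℝ → ℝ} (hf : ∀ x, HasDerivAt f (f' x) x)
    {a b C : ℝ} (hab : a ≤ b) (hC : ∀ x ∈ Set.Icc a b, C ≤ f' x) : C * (b - a) ≤ f b - f a :=
  (convex_Icc a b).mul_sub_le_image_sub_of_le_deriv
    (fun x _ => (hf x).continuousAt.continuousWithinAt)
    (fun x _ => (hf x).differentiableAt.differentiableWithinAt)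
    (fun x hx => (hf x).deriv ▸ hC x (interior_subset hx)) a ⟨le_rfl, hab⟩ b ⟨hab, le_rfl⟩ hab

namespace bernsteinPolynomial

variable {R : Type*} [CommRing R]

theorem derivative_sum_Ico_succ {n a : ℕ} (h : a ≤ n) :
    derivative (∑ ν ∈ Ico a n, bernsteinPolynomial R n (ν + 1)) =
      n * bernsteinPolynomial R (n - 1) a := by
  rcases n with _ | n
  · simp
  have telescope := sum_Ico_sub (fun ν => bernsteinPolynomial R n ν) h
  rw [sum_sub_distrib, eq_zero_of_lt R (Nat.lt_succ_self n)] at telescope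
  rw [derivative_sum]
  simp only [derivative_succ, ← mul_sum, sum_sub_distrib, Nat.add_sub_cancel]
  push_cast
  linear_combination (-(n + 1 : R[X])) * telescope

theorem sum_Ico_succ_comp_one_sub {n a : ℕ} (h : a ≤ n) :
    (∑ ν ∈ Ico a n, bernsteinPolynomial R n (ν + 1)).comp (1 - X) =
      ∑ k ∈ range (n - a), bernsteinPolynomial R n k := by
  rw [sum_Ico_eq_sum_range, Polynomial.sum_comp, ← sum_range_reflect]
  refine sum_congr rfl fun k hk => ?_
  rw [mem_range] at hk
  rw [flip R n _ (by omega)]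
  congr 1
  omega

end bernsteinPolynomial

open bernsteinPolynomial

/-- `P(Bin(m, p) > m/2)` as a polynomial in `p`, indexed by `ν = k - 1`. -/
noncomputable def majorityUpperTail (m : ℕ) : ℝ[X] :=
  ∑ ν ∈ Ico (m / 2) m, bernsteinPolynomial ℝ m (ν + 1)

/-- `P(B > m/2) - P(B < m/2)` for `B ~ Bin(m, 1/2 + x)`: the lower tail of `B` is the upper tail
of `m - B ~ Bin(m, 1/2 - x)`. -/
noncomputable def majorityGap (m : ℕ) (x : ℝ) : ℝ :=
  (majorityUpperTail m).eval (1 / 2 + x) - (majorityUpperTail m).eval (1 / 2 - x)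

theorem majorityGap_zero (m : ℕ) : majorityGap m 0 = 0 := by
  simp [majorityGap]

theorem natCast_mul_middle_bernsteinPolynomial_eval_symm {m : ℕ} (hm : 1 ≤ m) (x : ℝ) :
    m * ((bernsteinPolynomial ℝ (m - 1) (m / 2)).eval (1 / 2 + x) +
      (bernsteinPolynomial ℝ (m - 1) (m / 2)).eval (1 / 2 - x)) =
      2 * m * ((m / 2).centralBinom / 4 ^ (m / 2)) * (1 - 4 * x ^ 2) ^ ((m - 1) / 2) := by
  have hpq : 1 - 4 * x ^ 2 = 4 * ((1 / 2 + x) * (1 / 2 - x)) := by ring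
  obtain ⟨n, rfl | rfl⟩ := Nat.even_or_odd' m
  · obtain ⟨k, rfl⟩ : ∃ k, n = k + 1 := ⟨n - 1, by omega⟩
    have hC : ((k + 1).centralBinom : ℝ) = 2 * (2 * k + 1).choose (k + 1) := by
      rw [Nat.centralBinom_eq_two_mul_choose, show 2 * (k + 1) = 2 * k + 1 + 1 by ring,
        Nat.choose_succ_succ, ← Nat.choose_symm_half]
      push_cast; ring
    rw [show 2 * (k + 1) - 1 = 2 * k + 1 by omega, show 2 * (k + 1) / 2 = k + 1 by omega,
      show (2 * k + 1) / 2 = k by omega, hC]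
    simp only [bernsteinPolynomial, eval_mul, eval_pow, eval_sub, eval_one, eval_X, eval_natCast,
      show 2 * k + 1 - (k + 1) = k by omega, hpq, mul_pow, mul_pow]
    push_cast
    field_simp
    ring
  · rw [show 2 * n + 1 - 1 = 2 * n by omega, show (2 * n + 1) / 2 = n by omega,
      show 2 * n / 2 = n by omega, Nat.centralBinom_eq_two_mul_choose]
    simp only [bernsteinPolynomial, eval_mul, eval_pow, eval_sub, eval_one, eval_X, eval_natCast,
      show 2 * n - n = n by omega, hpq, mul_pow, mul_pow]
    push_cast
    field_simp
    ring

theorem hasDerivAt_majorityGap {m : ℕ} (hm : 1 ≤ m) (x : ℝ) :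
    HasDerivAt (majorityGap m)
      (2 * m * ((m / 2).centralBinom / 4 ^ (m / 2)) * (1 - 4 * x ^ 2) ^ ((m - 1) / 2)) x := by
  have hU : derivative (majorityUpperTail m) = m * bernsteinPolynomial ℝ (m - 1) (m / 2) :=
    derivative_sum_Ico_succ (Nat.div_le_self m 2)
  have h := ((majorityUpperTail m).hasDerivAt (1 / 2 + x)).comp_const_add (1 / 2) x |>.sub
    (((majorityUpperTail m).hasDerivAt (1 / 2 - x)).comp_const_sub (1 / 2) x)
  rw [hU] at h
  refine h.congr_deriv ?_
  rw [← natCast_mul_middle_bernsteinPolynomial_eval_symm hm]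
  simp only [eval_mul, eval_natCast]
  ring

theorem two_rectangles_le_sub_of_hasDerivAt {F : ℝ → ℝ} {c : ℝ} {E : ℕ} (hc : 0 ≤ c)
    (hF : ∀ x, HasDerivAt F (c * (1 - 4 * x ^ 2) ^ E) x) {φ θ : ℝ} (hφ : 0 < φ) (hφθ : φ ≤ θ)
    (hθ : θ ≤ 1 / 2) :
    c * (φ / 2) * ((1 - φ ^ 2) ^ E + (√2 - 1) * (1 - 2 * φ ^ 2) ^ E) ≤ F θ - F 0 := by
  have rectangle : ∀ a b, 0 ≤ a → a ≤ b → b ≤ 1 / 2 →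
      c * (1 - 4 * b ^ 2) ^ E * (b - a) ≤ F b - F a := fun a b ha hab hb =>
    mul_sub_le_sub_of_hasDerivAt hF hab fun x hx => by
      have : 0 ≤ 1 - 4 * b ^ 2 := by nlinarith
      gcongr
      all_goals nlinarith [hx.1, hx.2]
  have hs : √2 ^ 2 = 2 := sq_sqrt zero_le_two
  have hs1 : 1 ≤ √2 := one_le_sqrt.2 one_le_two
  have hs2 : √2 ≤ 2 := by nlinarith
  have h1 := rectangle 0 (φ / 2) le_rfl (by positivity) (by linarith)
  have h2 := rectangle (φ / 2) (√2 * φ / 2) (by positivity) (by nlinarith) (by nlinarith)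
  have h3 := rectangle (√2 * φ / 2) θ (by positivity) (by nlinarith) hθ
  have h3' : 0 ≤ c * (1 - 4 * θ ^ 2) ^ E * (θ - √2 * φ / 2) := by
    have : 0 ≤ 1 - 4 * θ ^ 2 := by nlinarith
    have : 0 ≤ θ - √2 * φ / 2 := by nlinarith
    positivity
  rw [show 1 - 4 * (φ / 2) ^ 2 = 1 - φ ^ 2 by ring] at h1
  rw [show 1 - 4 * (√2 * φ / 2) ^ 2 = 1 - 2 * φ ^ 2 by rw [mul_div_assoc, mul_pow, hs]; ring] at h2
  linear_combination h1 + h2 + h3 + h3'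

theorem mul_one_sub_pow_le_mul_one_sub_two_mul_pow {n : ℕ} {u : ℝ} (hu : 0 ≤ u)
    (hnu : (2 * n + 2) * u ≤ 1) :
    (n + 1) * (1 - u) ^ n ≤ (2 * n + 1) * (1 - 2 * u) ^ n := by
  have hu1 : 0 < 1 - u := by nlinarith
  set y := u / (1 - u) with hy
  have hy0 : 0 ≤ y := by positivity
  have hny : (2 * n + 1) * y ≤ 1 := by rw [hy, mul_div_assoc', div_le_one hu1]; linarith
  have hfac : 1 - 2 * u = (1 - u) * (1 - y) := by rw [hy]; field_simp; ring
  have hy1 : y ≤ 1 := by nlinarith [Nat.cast_nonneg (α := ℝ) n]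
  have bernoulli : 1 - n * y ≤ (1 - y) ^ n := by
    simpa [sub_eq_add_neg] using one_add_mul_le_pow (a := -y) (by linarith) n
  have hpow := pow_nonneg hu1.le n
  rw [hfac, mul_pow]
  nlinarith [mul_le_mul_of_nonneg_left bernoulli hpow,
    mul_nonneg hpow (Nat.cast_nonneg (α := ℝ) n)]

theorem sqrt_two_mul_div_pi_le_mul_centralBinom_div (n : ℕ) :
    √(2 * (2 * n + 1) / π) ≤ (2 * n + 1) * ((n.centralBinom : ℝ) / 4 ^ n) := by
  have hD := two_div_le_sq_centralBinom_div_four_pow n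
  rw [sqrt_le_left (by positivity), div_le_iff₀ pi_pos]
  rw [div_le_iff₀ (by positivity)] at hD
  nlinarith [Nat.cast_nonneg (α := ℝ) n]

theorem sqrt_two_mul_div_pi_mul_pow_le_even (k : ℕ) {u : ℝ} (hu : 0 ≤ u)
    (hku : (2 * k + 2) * u ≤ 1) :
    √(2 * (2 * k + 2) / π) * (1 - u) ^ k ≤
      (2 * k + 2) * (((k + 1).centralBinom : ℝ) / 4 ^ (k + 1)) *
        ((1 - u) ^ k + (√2 - 1) * (1 - 2 * u) ^ k) := by
  set D := ((k + 1).centralBinom : ℝ) / 4 ^ (k + 1)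
  have hD : 2 / (π * (2 * k + 3)) ≤ D ^ 2 := by
    have := two_div_le_sq_centralBinom_div_four_pow (k + 1)
    rwa [Nat.cast_succ, show (2 : ℝ) * (k + 1) + 1 = 2 * k + 3 by ring] at this
  have hs : (1.4 : ℝ) ≤ √2 := by
    rw [le_sqrt (by norm_num) (by norm_num)]; norm_num
  -- `L / (2k + 1)` bounds the bracket divided by `(1 - u)^k`, by the Bernoulli step `hB` below.
  set L := (2 * k + 1) + (√2 - 1) * (k + 1)
  have hL : 2.4 * k + 1.4 ≤ L := by nlinarith [Nat.cast_nonneg (α := ℝ) k]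
  have hk := Nat.cast_nonneg (α := ℝ) k
  have hD0 : 0 ≤ D := by positivity
  have hL0 : 0 ≤ L := by linarith
  have key : √(2 * (2 * k + 2) / π) * (2 * k + 1) ≤ (2 * k + 2) * D * L := by
    rw [← sqrt_sq (by positivity : (0 : ℝ) ≤ 2 * k + 1), ← sqrt_mul (by positivity),
      sqrt_le_left (by positivity)]
    rw [div_le_iff₀ (by positivity)] at hD
    have hpoly : (2 * k + 1) ^ 2 * (2 * k + 3) ≤ (2 * k + 2) * L ^ 2 := by
      nlinarith [mul_le_mul hL hL (by positivity) (by linarith)]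
    rw [div_mul_eq_mul_div, div_le_iff₀ pi_pos]
    nlinarith [mul_le_mul_of_nonneg_left hD (by positivity : (0 : ℝ) ≤ (2 * k + 2) ^ 2 * L ^ 2)]
  have hB := mul_one_sub_pow_le_mul_one_sub_two_mul_pow hu hku
  have hP := pow_nonneg (by nlinarith : (0 : ℝ) ≤ 1 - u) k
  have hB' := mul_le_mul_of_nonneg_left hB (by nlinarith : (0 : ℝ) ≤ (2 * k + 2) * D * (√2 - 1))
  refine le_of_mul_le_mul_right ?_ (by positivity : (0 : ℝ) < 2 * k + 1)
  calc √(2 * (2 * k + 2) / π) * (1 - u) ^ k * (2 * k + 1)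
      ≤ (2 * k + 2) * D * L * (1 - u) ^ k := by nlinarith
    _ ≤ _ := by linear_combination hB'

theorem sqrt_two_mul_div_pi_mul_pow_le {m : ℕ} (hm : 1 ≤ m) {u : ℝ} (hu : 0 ≤ u)
    (hmu : m * u ≤ 1) (hu2 : 2 * u ≤ 1) :
    √(2 * m / π) * (1 - u) ^ ((m - 1) / 2) ≤ m * (((m / 2).centralBinom : ℝ) / 4 ^ (m / 2)) *
      ((1 - u) ^ ((m - 1) / 2) + (√2 - 1) * (1 - 2 * u) ^ ((m - 1) / 2)) := by
  obtain ⟨n, rfl | rfl⟩ := Nat.even_or_odd' m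
  · obtain ⟨k, rfl⟩ : ∃ k, n = k + 1 := ⟨n - 1, by omega⟩
    rw [show (2 * (k + 1) - 1) / 2 = k by omega, show 2 * (k + 1) / 2 = k + 1 by omega]
    push_cast at hmu ⊢
    convert sqrt_two_mul_div_pi_mul_pow_le_even k hu (by linarith) using 3 <;> ring
  · rw [show (2 * n + 1 - 1) / 2 = n by omega, show (2 * n + 1) / 2 = n by omega]
    push_cast
    have hs : 1 ≤ √2 := one_le_sqrt.2 one_le_two
    have hP := pow_nonneg (by linarith : (0 : ℝ) ≤ 1 - u) n
    have hQ := pow_nonneg (by linarith : (0 : ℝ) ≤ 1 - 2 * u) n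
    calc √(2 * (2 * n + 1) / π) * (1 - u) ^ n
        ≤ (2 * n + 1) * ((n.centralBinom : ℝ) / 4 ^ n) * (1 - u) ^ n := by
          gcongr; exact sqrt_two_mul_div_pi_le_mul_centralBinom_div n
      _ ≤ _ := by
          gcongr
          nlinarith [mul_nonneg (sub_nonneg.2 hs) hQ]

theorem sqrt_mul_le_majorityGap {m : ℕ} (hm : 1 ≤ m) {φ θ : ℝ} (hφ : 0 < φ) (hφθ : φ ≤ θ)
    (hθ : θ ≤ 1 / 2) (hmφ : m * φ ^ 2 ≤ 1) :
    √(2 * m / π) * (φ * (1 - φ ^ 2) ^ (((m : ℝ) - 1) / 2)) ≤ majorityGap m θ := by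
  set D := ((m / 2).centralBinom : ℝ) / 4 ^ (m / 2)
  have hrect := two_rectangles_le_sub_of_hasDerivAt (c := 2 * m * D) (by positivity)
    (hasDerivAt_majorityGap hm) hφ hφθ hθ
  rw [majorityGap_zero, sub_zero] at hrect
  have hφ2 : φ ^ 2 < 1 := by nlinarith
  have hexp : (((m - 1) / 2 : ℕ) : ℝ) ≤ ((m : ℝ) - 1) / 2 := by
    rw [← Nat.cast_pred hm]; exact Nat.cast_div_le
  have hrpow : (1 - φ ^ 2) ^ (((m : ℝ) - 1) / 2) ≤ (1 - φ ^ 2) ^ ((m - 1) / 2) := by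
    rw [← rpow_natCast (1 - φ ^ 2)]
    exact rpow_le_rpow_of_exponent_ge (by linarith : 0 < 1 - φ ^ 2) (by nlinarith) hexp
  have harith := sqrt_two_mul_div_pi_mul_pow_le hm (sq_nonneg φ) hmφ (by nlinarith)
  calc √(2 * m / π) * (φ * (1 - φ ^ 2) ^ (((m : ℝ) - 1) / 2))
      ≤ φ * (√(2 * m / π) * (1 - φ ^ 2) ^ ((m - 1) / 2)) := by
        rw [mul_left_comm]; gcongr
    _ ≤ φ * (m * D * ((1 - φ ^ 2) ^ ((m - 1) / 2) +
          (√2 - 1) * (1 - 2 * φ ^ 2) ^ ((m - 1) / 2))) := by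
        gcongr
    _ = _ := by ring
    _ ≤ majorityGap m θ := hrect

section Probability

variable {Ω : Type*} [MeasurableSpace Ω] {μ : Measure Ω}

theorem toReal_measure_le_sum_of_forall_mem {B : Ω → ℕ} {b : ℕ → ℝ} (hb : ∀ k, 0 ≤ b k)
    (hB : ∀ k, μ {ω | B ω = k} = ENNReal.ofReal (b k)) (s : Finset ℕ) {S : Set Ω}
    (hS : ∀ ω ∈ S, B ω ∈ s) : (μ S).toReal ≤ ∑ k ∈ s, b k := by
  refine ENNReal.toReal_le_of_le_ofReal (sum_nonneg fun k _ => hb k) ?_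
  calc μ S ≤ μ (⋃ k ∈ s, {ω | B ω = k}) :=
        measure_mono fun ω hω => Set.mem_biUnion (hS ω hω) rfl
    _ ≤ ∑ k ∈ s, μ {ω | B ω = k} := measure_biUnion_finset_le s _
    _ = ENNReal.ofReal (∑ k ∈ s, b k) := by
        rw [ENNReal.ofReal_sum_of_nonneg fun k _ => hb k]
        exact sum_congr rfl fun k _ => hB k

theorem one_le_toReal_measure_add_compl [IsProbabilityMeasure μ] (S : Set Ω) :
    1 ≤ (μ S).toReal + (μ Sᶜ).toReal := by
  have h := measure_union_le (μ := μ) S Sᶜ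
  rw [Set.union_compl_self, measure_univ] at h
  rw [← ENNReal.toReal_add (measure_ne_top μ S) (measure_ne_top μ Sᶜ)]
  simpa using ENNReal.toReal_mono (by finiteness) h

theorem majorityGap_le_measure_sub [IsProbabilityMeasure μ] {m : ℕ} {θ : ℝ} (hθ0 : -(1 / 2) ≤ θ)
    (hθ1 : θ ≤ 1 / 2) {B : Ω → ℕ} (hB : ∀ k : ℕ, μ {ω | B ω = k} =
      ENNReal.ofReal ((m.choose k : ℝ) * (1 / 2 + θ) ^ k * (1 / 2 - θ) ^ (m - k))) :
    majorityGap m θ ≤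
      (μ {ω | (m : ℝ) / 2 < B ω}).toReal - (μ {ω | (B ω : ℝ) < m / 2}).toReal := by
  set b : ℕ → ℝ := fun k => (bernsteinPolynomial ℝ m k).eval (1 / 2 + θ)
  have hb_eq : ∀ k, b k = m.choose k * (1 / 2 + θ) ^ k * (1 / 2 - θ) ^ (m - k) := fun k => by
    simp only [b, bernsteinPolynomial, eval_mul, eval_pow, eval_sub, eval_one, eval_X,
      eval_natCast]
    ring
  have hb : ∀ k, 0 ≤ b k := fun k => by
    rw [hb_eq]
    exact mul_nonneg (mul_nonneg (Nat.cast_nonneg _) (pow_nonneg (by linarith) _))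
      (pow_nonneg (by linarith) _)
  simp_rw [← hb_eq] at hB
  have hupper : (majorityUpperTail m).eval (1 / 2 + θ) = ∑ ν ∈ Ico (m / 2) m, b (ν + 1) := by
    simp only [majorityUpperTail, eval_finsetSum, b]
  have hlower : (majorityUpperTail m).eval (1 / 2 - θ) = ∑ k ∈ range (m - m / 2), b k := by
    rw [show 1 / 2 - θ = (1 - X : ℝ[X]).eval (1 / 2 + θ) by simp; ring, ← eval_comp,
      majorityUpperTail, sum_Ico_succ_comp_one_sub (Nat.div_le_self m 2), eval_finsetSum]
  have htotal : ∑ k ∈ range (m / 2 + 1), b k + ∑ ν ∈ Ico (m / 2) m, b (ν + 1) = 1 := by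
    rw [sum_Ico_add' b, sum_range_add_sum_Ico b (by omega : m / 2 + 1 ≤ m + 1)]
    simpa [b, eval_finsetSum] using congrArg (eval (1 / 2 + θ)) (bernsteinPolynomial.sum ℝ m)
  have hle := toReal_measure_le_sum_of_forall_mem hb hB (range (m / 2 + 1))
    (S := {ω | (m : ℝ) / 2 < B ω}ᶜ) fun ω hω => by
      have : (2 * B ω : ℝ) ≤ m := by linarith [not_lt.1 (show ¬(m : ℝ) / 2 < B ω from hω)]
      have : 2 * B ω ≤ m := by exact_mod_cast this
      rw [mem_range]; omega
  have hlt := toReal_measure_le_sum_of_forall_mem hb hB (range (m - m / 2))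
    (S := {ω | (B ω : ℝ) < m / 2}) fun ω hω => by
      have : (2 * B ω : ℝ) < m := by linarith [show (B ω : ℝ) < m / 2 from hω]
      have : 2 * B ω < m := by exact_mod_cast this
      rw [mem_range]; omega
  have hone := one_le_toReal_measure_add_compl (μ := μ) {ω | (m : ℝ) / 2 < B ω}
  rw [majorityGap, hupper, hlower]
  linarith

end Probability

theorem biased_binomial_majority_gap
    {Ω : Type*} [MeasurableSpace Ω] (μ : Measure Ω) [IsProbabilityMeasure μ]
    (m : ℕ) (hm : 1 ≤ m) (θ : ℝ) (hθ0 : 0 < θ) (hθ1 : θ ≤ 1 / 2)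
    (B : Ω → ℕ)
    (hB : ∀ k : ℕ, μ {ω | B ω = k} =
      ENNReal.ofReal ((m.choose k : ℝ) * (1 / 2 + θ) ^ k * (1 / 2 - θ) ^ (m - k)))
    (g : ℝ)
    (hg : g = if θ < 1 / Real.sqrt m
      then θ * (1 - θ ^ 2) ^ (((m : ℝ) - 1) / 2)
      else (1 / Real.sqrt m) * (1 - 1 / (m : ℝ)) ^ (((m : ℝ) - 1) / 2)) :
    (μ {ω | (m : ℝ) / 2 < (B ω : ℝ)}).toReal - (μ {ω | (B ω : ℝ) < (m : ℝ) / 2}).toReal ≥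
      Real.sqrt (2 * m / Real.pi) * g := by
  have hm' : (0 : ℝ) < m := by exact_mod_cast hm
  set φ := min θ (1 / √m)
  have hφ : 0 < φ := lt_min hθ0 (by positivity)
  have hmφ : m * φ ^ 2 ≤ 1 := by
    have h := pow_le_pow_left₀ hφ.le (min_le_right θ (1 / √m)) 2
    rw [div_pow, one_pow, sq_sqrt hm'.le, le_div_iff₀ hm'] at h
    linarith
  have hgφ : g = φ * (1 - φ ^ 2) ^ (((m : ℝ) - 1) / 2) := by
    rw [hg]
    split_ifs with h
    · rw [show φ = θ from min_eq_left h.le]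
    · rw [show φ = 1 / √m from min_eq_right (not_lt.1 h), div_pow, one_pow, sq_sqrt hm'.le]
  rw [ge_iff_le, hgφ]
  exact (sqrt_mul_le_majorityGap hm hφ (min_le_left _ _) hθ1 hmφ).trans
    (majorityGap_le_measure_sub (by linarith) hθ1 hB)
end

section
/- Let a, b, δ be real numbers with 0 ≤ b ≤ a ≤ 1/4 and 0 ≤ δ ≤ 1/2, and suppose a + b > 0 or δ > 0. Define q₁ := (a(1−δ) + (1−a)δ)·(bδ + (1−b)(1−δ)) and q₋₁ := (aδ + (1−a)(1−δ))·(b(1−δ) + (1−b)δ). Then q₁ + q₋₁ > 0 and: (i) if δ > 0 and δ ≥ ((a+b)/2)·(1−2δ), then q₁/(q₁ + q₋₁) ≥ 1/2 + (a − b)·(1−2δ)/(8δ); (ii) if a + b > 0 and δ < ((a+b)/2)·(1−2δ), then q₁/(q₁ + q₋₁) ≥ 1/2 + (a − b)/(4(a + b)). -/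
/-!
Writing `S = q₁ + q₋₁`, a direct expansion gives `q₁ - q₋₁ = (a - b)(1 - 2δ)` and
`S = (a + b - 2ab)(1 - 2δ)² + 2δ(1 - δ)`, so `q₁ / S = 1/2 + (a - b)(1 - 2δ) / (2S)`.
Both bounds then come from an upper bound on `S`: `S ≤ 4δ` in the noise-dominated regime
`(a + b)(1 - 2δ) ≤ 2δ`, and `S ≤ 2(a + b)(1 - 2δ)` in the opposite regime.
-/

theorem half_add_div_le_div_add {p m T : ℝ} (hpm : 0 ≤ p - m) (hS : 0 < p + m)
    (hT : p + m ≤ T) : 1 / 2 + (p - m) / (2 * T) ≤ p / (p + m) := by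
  have hsplit : p / (p + m) = 1 / 2 + (p - m) / (2 * (p + m)) := by
    field_simp
    ring
  rw [hsplit]
  gcongr

noncomputable def pairedMass (a b δ : ℝ) : ℝ :=
  (a + b - 2 * a * b) * (1 - 2 * δ) ^ 2 + 2 * δ * (1 - δ)

theorem pairedMass_eq (a b δ : ℝ) :
    (a * (1 - δ) + (1 - a) * δ) * (b * δ + (1 - b) * (1 - δ)) +
      (a * δ + (1 - a) * (1 - δ)) * (b * (1 - δ) + (1 - b) * δ) = pairedMass a b δ := by
  unfold pairedMass
  ring

section PairedMass

variable {a b δ : ℝ}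

theorem pairedMass_pos (ha : 0 ≤ a) (hb : 0 ≤ b) (ha1 : a < 1) (hb1 : b < 1)
    (hδ0 : 0 ≤ δ) (hδ1 : δ ≤ 1 / 2) (hpos : 0 < a + b ∨ 0 < δ) : 0 < pairedMass a b δ := by
  unfold pairedMass
  rcases hδ0.eq_or_lt with rfl | hδ
  · have hab : 0 < a + b := hpos.resolve_right (lt_irrefl 0)
    nlinarith [mul_le_mul_of_nonneg_left hb1.le ha, mul_le_mul_of_nonneg_left ha1.le hb]
  · nlinarith [mul_nonneg ha (sub_pos.2 hb1).le, mul_nonneg hb (sub_pos.2 ha1).le,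
      sq_nonneg (1 - 2 * δ)]

theorem pairedMass_le_four_mul_of_le (ha : 0 ≤ a) (hb : 0 ≤ b) (hδ1 : δ ≤ 1 / 2)
    (hnoise : (a + b) / 2 * (1 - 2 * δ) ≤ δ) : pairedMass a b δ ≤ 4 * δ := by
  unfold pairedMass
  nlinarith [mul_nonneg (mul_nonneg ha hb) (sq_nonneg (1 - 2 * δ)),
    mul_le_mul_of_nonneg_right hnoise (by linarith : (0 : ℝ) ≤ 1 - 2 * δ), sq_nonneg δ]

theorem pairedMass_le_two_mul_of_lt (ha : 0 ≤ a) (hb : 0 ≤ b) (hδ0 : 0 ≤ δ)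
    (hsignal : δ < (a + b) / 2 * (1 - 2 * δ)) : pairedMass a b δ ≤ 2 * (a + b) * (1 - 2 * δ) := by
  unfold pairedMass
  have h12 : 0 ≤ 1 - 2 * δ := by nlinarith
  nlinarith [mul_nonneg (mul_nonneg ha hb) (sq_nonneg (1 - 2 * δ)),
    mul_nonneg (add_nonneg ha hb) (mul_nonneg hδ0 h12)]

end PairedMass

theorem paired_message_conditional_bias
    (a b δ : ℝ) (hb0 : 0 ≤ b) (hba : b ≤ a) (ha1 : a ≤ 1 / 4)
    (hδ0 : 0 ≤ δ) (hδ1 : δ ≤ 1 / 2)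
    (hpos : 0 < a + b ∨ 0 < δ)
    (q1 qm1 : ℝ)
    (hq1 : q1 = (a * (1 - δ) + (1 - a) * δ) * (b * δ + (1 - b) * (1 - δ)))
    (hqm1 : qm1 = (a * δ + (1 - a) * (1 - δ)) * (b * (1 - δ) + (1 - b) * δ)) :
    0 < q1 + qm1 ∧
    (0 < δ → δ ≥ ((a + b) / 2) * (1 - 2 * δ) →
      q1 / (q1 + qm1) ≥ 1 / 2 + (a - b) * (1 - 2 * δ) / (8 * δ)) ∧
    (0 < a + b → δ < ((a + b) / 2) * (1 - 2 * δ) →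
      q1 / (q1 + qm1) ≥ 1 / 2 + (a - b) / (4 * (a + b))) := by
  have ha0 : 0 ≤ a := hb0.trans hba
  have hsum : q1 + qm1 = pairedMass a b δ := by rw [hq1, hqm1, pairedMass_eq]
  have hdiff : q1 - qm1 = (a - b) * (1 - 2 * δ) := by rw [hq1, hqm1]; ring
  have hS : 0 < q1 + qm1 := hsum ▸
    pairedMass_pos ha0 hb0 (by linarith) (by linarith) hδ0 hδ1 hpos
  refine ⟨hS, fun hδ hnoise => ?_, fun hab hsignal => ?_⟩
  · have hbound := half_add_div_le_div_add (T := 4 * δ)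
      (hdiff ▸ mul_nonneg (sub_nonneg.2 hba) (by linarith)) hS
      (hsum ▸ pairedMass_le_four_mul_of_le ha0 hb0 hδ1 hnoise)
    rw [hdiff, ← mul_assoc, show (2 : ℝ) * 4 = 8 by norm_num] at hbound
    exact hbound
  · have h12 : 0 < 1 - 2 * δ := by nlinarith
    have hbound := half_add_div_le_div_add (T := 2 * (a + b) * (1 - 2 * δ))
      (hdiff ▸ mul_nonneg (sub_nonneg.2 hba) h12.le) hS
      (hsum ▸ pairedMass_le_two_mul_of_lt ha0 hb0 hδ0 hsignal)
    rwa [hdiff, show 2 * (2 * (a + b) * (1 - 2 * δ)) = 4 * (a + b) * (1 - 2 * δ) by ring,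
      mul_div_mul_right _ _ h12.ne'] at hbound
end

section
/- Let a, b, δ be real numbers with 0 ≤ b ≤ a ≤ 1, a + b ≤ 1, and 0 ≤ δ < 1/4, and suppose a + b > 0 or δ > 0. Define p₁ := a(1−3δ) + (1−a)δ and p₋₁ := b(1−3δ) + (1−b)δ. Then: (i) p₁ + p₋₁ = 2δ + (1−4δ)·(a + b); (ii) p₁ + p₋₁ ≥ δ + (1−4δ)²·(a+b)/2; (iii) p₁ − p₋₁ = (a − b)·(1−4δ); (iv) if δ > 0 and δ ≥ ((a+b)/2)·(1−4δ), then p₁/(p₁ + p₋₁) ≥ 1/2 + (a − b)·(1−4δ)/(8δ); (v) if a + b > 0 and δ < ((a+b)/2)·(1−4δ), then p₁/(p₁ + p₋₁) ≥ 1/2 + (a − b)/(4(a + b)). -/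
/-!
`S = p₁ + p₋₁` depends only on `a + b` and `D = p₁ - p₋₁` only on `a - b`, giving (i) and (iii).
Since `p₁ / S = 1/2 + D / (2 S)` and `D ≥ 0`, any upper bound `S ≤ T` yields `p₁ / S ≥ 1/2 + D / (2 T)`.
In regime (iv) the hypothesis says `S ≤ 4δ`; in regime (v) it says `S < 2 (1 - 4δ)(a + b)`.
-/

section HalfAddBound

variable {K : Type*} [Field K] [LinearOrder K] [IsStrictOrderedRing K]

theorem div_add_eq_half_add_sub_div {p q : K} (h : p + q ≠ 0) :
    p / (p + q) = 1 / 2 + (p - q) / (2 * (p + q)) := by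
  field_simp
  ring

theorem half_add_sub_div_le_div_add {p q T : K} (hqp : q ≤ p) (hpq : 0 < p + q)
    (hT : p + q ≤ T) : 1 / 2 + (p - q) / (2 * T) ≤ p / (p + q) := by
  rw [div_add_eq_half_add_sub_div hpq.ne']
  have : 0 ≤ p - q := sub_nonneg.mpr hqp
  gcongr

end HalfAddBound

theorem ssf_message_probabilities_general
    (a b δ : ℝ) (hb0 : 0 ≤ b) (hba : b ≤ a)
    (hδ0 : 0 ≤ δ) (hδ1 : δ < 1 / 4)
    (p1 pm1 : ℝ)
    (hp1 : p1 = a * (1 - 3 * δ) + (1 - a) * δ)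
    (hpm1 : pm1 = b * (1 - 3 * δ) + (1 - b) * δ) :
    p1 + pm1 = 2 * δ + (1 - 4 * δ) * (a + b) ∧
    p1 + pm1 ≥ δ + (1 - 4 * δ) ^ 2 * ((a + b) / 2) ∧
    p1 - pm1 = (a - b) * (1 - 4 * δ) ∧
    (0 < δ → δ ≥ ((a + b) / 2) * (1 - 4 * δ) →
      p1 / (p1 + pm1) ≥ 1 / 2 + (a - b) * (1 - 4 * δ) / (8 * δ)) ∧
    (0 < a + b → δ < ((a + b) / 2) * (1 - 4 * δ) →
      p1 / (p1 + pm1) ≥ 1 / 2 + (a - b) / (4 * (a + b))) := by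
  have he : 0 < 1 - 4 * δ := by linarith
  have hes : 0 ≤ (1 - 4 * δ) * (a + b) := mul_nonneg he.le (by linarith)
  have hsum : p1 + pm1 = 2 * δ + (1 - 4 * δ) * (a + b) := by rw [hp1, hpm1]; ring
  have hdiff : p1 - pm1 = (a - b) * (1 - 4 * δ) := by rw [hp1, hpm1]; ring
  have hqp : pm1 ≤ p1 := sub_nonneg.mp (hdiff ▸ mul_nonneg (by linarith) he.le)
  refine ⟨hsum, ?_, hdiff, ?_, ?_⟩
  · -- the difference of the two sides is `δ + (1 + 4δ)(1 - 4δ)(a + b) / 2`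
    nlinarith [mul_nonneg hes hδ0]
  · intro hδ hge
    have hT : p1 + pm1 ≤ 4 * δ := by linarith
    have h := half_add_sub_div_le_div_add hqp (by linarith) hT
    rwa [hdiff, ← mul_assoc, show (2 : ℝ) * 4 = 8 by norm_num] at h
  · intro hs hlt
    have hT : p1 + pm1 ≤ 2 * ((a + b) * (1 - 4 * δ)) := by linarith
    have h := half_add_sub_div_le_div_add hqp (by linarith) hT
    rwa [hdiff, show 2 * (2 * ((a + b) * (1 - 4 * δ))) = 4 * (a + b) * (1 - 4 * δ) by ring,
      mul_div_mul_right _ _ he.ne'] at h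

theorem ssf_message_probabilities
    (a b δ : ℝ) (hb0 : 0 ≤ b) (hba : b ≤ a) (ha1 : a ≤ 1) (hab : a + b ≤ 1)
    (hδ0 : 0 ≤ δ) (hδ1 : δ < 1 / 4)
    (hpos : 0 < a + b ∨ 0 < δ)
    (p1 pm1 : ℝ)
    (hp1 : p1 = a * (1 - 3 * δ) + (1 - a) * δ)
    (hpm1 : pm1 = b * (1 - 3 * δ) + (1 - b) * δ) :
    p1 + pm1 = 2 * δ + (1 - 4 * δ) * (a + b) ∧
    p1 + pm1 ≥ δ + (1 - 4 * δ) ^ 2 * ((a + b) / 2) ∧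
    p1 - pm1 = (a - b) * (1 - 4 * δ) ∧
    (0 < δ → δ ≥ ((a + b) / 2) * (1 - 4 * δ) →
      p1 / (p1 + pm1) ≥ 1 / 2 + (a - b) * (1 - 4 * δ) / (8 * δ)) ∧
    (0 < a + b → δ < ((a + b) / 2) * (1 - 4 * δ) →
      p1 / (p1 + pm1) ≥ 1 / 2 + (a - b) / (4 * (a + b))) :=
  ssf_message_probabilities_general a b δ hb0 hba hδ0 hδ1 p1 pm1 hp1 hpm1
end
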